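/- arXiv:2305.01792 — 2 statements merged into one kernel-verified Lean document; each statement's English description precedes it below -/
import Mathlib

section
/- Let θ ∈ (0, 1/2], let n ≥ 1 be an integer, let y ∈ S_{T[θ,S_n]} with basis expansion y = Σ_{i=1}^∞ b_i e_i, let j be a positive integer, and let ε ∈ {−1, 1}. Then the vector x = Σ_{i≠j} θ b_i e_i + ε e_j belongs to S_{T[θ,S_n]}, i.e., ‖x‖ = 1. -/
open scoped BigOperators

noncomputable section

/-- Projection of a finitely supported vector onto the coordinates in `E`. -/
def tsProj (E : Finset ℕ+) (x : ℕ+ →₀ ℝ) : ℕ+ →₀ ℝ :=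
  x.filter fun i => i ∈ E

/-- The Schreier families `S_n` on the positive integers:
`S₁` consists of the sets `F` with `|F| ≤ min F` (together with `∅`), and `S_{n+1}`
consists of unions `F₁ ∪ ⋯ ∪ F_d` of nonempty members `F₁ < ⋯ < F_d` of `S_n`
with `d ≤ min F₁` (together with `∅`). -/
def Schreier : ℕ → Set (Finset ℕ+)
  | 0 => {F | F.card ≤ 1}
  | 1 => {F | ∀ a ∈ F, F.card ≤ (a : ℕ)}
  | n + 2 =>
      {F | F = ∅ ∨
        ∃ (d : ℕ) (G : Fin d → Finset ℕ+),
          0 < d ∧ (∀ i, G i ∈ Schreier (n + 1)) ∧ (∀ i, (G i).Nonempty) ∧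
          (∀ i j : Fin d, i < j → ∀ a ∈ G i, ∀ b ∈ G j, a < b) ∧
          (∀ i, ∀ a ∈ G i, d ≤ (a : ℕ)) ∧ F = Finset.univ.biUnion G}

/-- A tuple of nonempty finite sets `E 0 < E 1 < ⋯` whose set of minima belongs to `S`. -/
def TsAdmissible (S : Set (Finset ℕ+)) {d : ℕ} (E : Fin d → Finset ℕ+) : Prop :=
  (∀ i, (E i).Nonempty) ∧
  (∀ i j : Fin d, i < j → ∀ a ∈ E i, ∀ b ∈ E j, a < b) ∧
  ∃ μ : Fin d → ℕ+, (∀ i, IsLeast (↑(E i) : Set ℕ+) (μ i)) ∧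
    Finset.univ.image μ ∈ S

/-- The iterated norms `‖·‖_m` in the construction of the Tsirelson norm:
`‖x‖₀` is the supremum norm and
`‖x‖_{m+1} = max(‖x‖_m, sup{θ ∑ᵢ ‖Eᵢ x‖_m : E₁ < ⋯ < E_d, {min Eᵢ} ∈ S})`. -/
def tnormAux (θ : ℝ) (S : Set (Finset ℕ+)) : ℕ → (ℕ+ →₀ ℝ) → ℝ
  | 0, x => ⨆ i, |x i|
  | m + 1, x =>
      max (tnormAux θ S m x)
        (sSup {r : ℝ | ∃ (d : ℕ) (E : Fin d → Finset ℕ+), TsAdmissible S E ∧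
          r = θ * ∑ i, tnormAux θ S m (tsProj (E i) x)})

/-- The Tsirelson norm `‖x‖_{θ,S} = sup_m ‖x‖_m` on `c₀₀`. -/
def tnorm (θ : ℝ) (S : Set (Finset ℕ+)) (x : ℕ+ →₀ ℝ) : ℝ :=
  ⨆ m : ℕ, tnormAux θ S m x

/-- `X`, together with the sequence `e` of unit vectors, is (a realization of) the
Tsirelson space `T[θ, S_n]`: a Banach space containing `c₀₀` isometrically
(w.r.t. the Tsirelson norm) as a dense subspace, in which `(e i)` is a
(1-unconditional) basis, i.e. every `x` has a unique expansion `x = ∑ᵢ aᵢ eᵢ`. -/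
structure IsTsirelsonSpace (θ : ℝ) (n : ℕ) (X : Type*) [NormedAddCommGroup X]
    [NormedSpace ℝ X] (e : ℕ+ → X) : Prop where
  complete : CompleteSpace X
  norm_embed : ∀ a : ℕ+ →₀ ℝ, ‖a.sum fun i c => c • e i‖ = tnorm θ (Schreier n) a
  dense_embed : DenseRange fun a : ℕ+ →₀ ℝ => a.sum fun i c => c • e i
  expansion : ∀ x : X, ∃! a : ℕ+ → ℝ, HasSum (fun i => a i • e i) x

/-!
Work first on finitely supported vectors. If `z j = 0` and `|ε| = 1`, then at every level
`‖θ • z + ε • e_j‖_m ≤ max 1 (θ * ‖z‖_m + θ)`: at level `0` the coordinate `j` contributes `1`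
and the others at most `θ * ‖z‖₀`, while at a later level the sets of an admissible family are
disjoint, so `e_j` meets only one of them and adds at most `θ` to the admissible sum. Hence the
finite truncations `x_F = θ • (y_F).erase j + ε • e_j` of `x` (for `j ∈ F`) satisfy
`1 = |x_F j| ≤ ‖x_F‖ ≤ max 1 (θ * ‖y_F‖ + θ)`, and since `‖y_F‖ → 1` and `2θ ≤ 1`, the limit
`‖x‖` equals `1`.
-/

open Filter Topology

namespace Tsirelson

/-- The `ℓ¹` norm dominates every `‖·‖_m`; this bounds the sets whose `sSup` enters
`tnormAux`, so that `le_csSup` applies to them. -/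
def l1norm (x : ℕ+ →₀ ℝ) : ℝ := x.sum fun _ c => |c|

lemma l1norm_nonneg (x : ℕ+ →₀ ℝ) : 0 ≤ l1norm x :=
  Finset.sum_nonneg fun _ _ => abs_nonneg _

lemma abs_le_l1norm (x : ℕ+ →₀ ℝ) (i : ℕ+) : |x i| ≤ l1norm x := by
  by_cases h : i ∈ x.support
  · exact Finset.single_le_sum (f := fun k => |x k|) (fun _ _ => abs_nonneg _) h
  · rw [Finsupp.notMem_support_iff.mp h, abs_zero]
    exact l1norm_nonneg x

lemma l1norm_single (k : ℕ+) (c : ℝ) : l1norm (Finsupp.single k c) = |c| :=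
  Finsupp.sum_single_index abs_zero

lemma tsProj_apply (E : Finset ℕ+) (x : ℕ+ →₀ ℝ) (i : ℕ+) :
    tsProj E x i = if i ∈ E then x i else 0 := rfl

lemma tsProj_add (E : Finset ℕ+) (x y : ℕ+ →₀ ℝ) :
    tsProj E (x + y) = tsProj E x + tsProj E y :=
  Finsupp.filter_add

lemma tsProj_smul (E : Finset ℕ+) (t : ℝ) (x : ℕ+ →₀ ℝ) :
    tsProj E (t • x) = t • tsProj E x :=
  Finsupp.filter_smul

section Admissible

variable {S : Set (Finset ℕ+)} {d : ℕ} {E : Fin d → Finset ℕ+}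

lemma TsAdmissible.eq_of_mem (hE : TsAdmissible S E) {i k : Fin d} {a : ℕ+}
    (hi : a ∈ E i) (hk : a ∈ E k) : i = k := by
  by_contra hne
  rcases lt_or_gt_of_ne hne with h | h
  · exact lt_irrefl a (hE.2.1 i k h a hi a hk)
  · exact lt_irrefl a (hE.2.1 k i h a hk a hi)

lemma TsAdmissible.card_filter_mem_le_one (hE : TsAdmissible S E) (a : ℕ+) :
    (Finset.univ.filter fun i => a ∈ E i).card ≤ 1 :=
  Finset.card_le_one.mpr fun _ hi _ hk =>
    TsAdmissible.eq_of_mem hE (Finset.mem_filter.mp hi).2 (Finset.mem_filter.mp hk).2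

lemma TsAdmissible.sum_l1norm_tsProj_le (hE : TsAdmissible S E) (x : ℕ+ →₀ ℝ) :
    ∑ i, l1norm (tsProj (E i) x) ≤ l1norm x := by
  classical
  have hproj : ∀ i, l1norm (tsProj (E i) x) = ∑ a ∈ x.support, if a ∈ E i then |x a| else 0 := by
    intro i
    rw [l1norm, Finsupp.sum_of_support_subset _ (Finset.filter_subset _ _) _ fun _ _ => abs_zero]
    refine Finset.sum_congr rfl fun a _ => ?_
    rw [tsProj_apply]
    split_ifs <;> simp
  simp only [hproj]
  rw [Finset.sum_comm]
  refine Finset.sum_le_sum fun a _ => ?_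
  rw [← Finset.sum_filter (fun i => a ∈ E i), Finset.sum_const, nsmul_eq_mul]
  exact mul_le_of_le_one_left (abs_nonneg _)
    (by exact_mod_cast TsAdmissible.card_filter_mem_le_one hE a)

lemma TsAdmissible.mul_sum_le_l1norm {θ : ℝ} (hθ1 : θ ≤ 1) (hE : TsAdmissible S E)
    {f : (ℕ+ →₀ ℝ) → ℝ} (hf0 : ∀ w, 0 ≤ f w) (hf : ∀ w, f w ≤ l1norm w) (x : ℕ+ →₀ ℝ) :
    θ * ∑ i, f (tsProj (E i) x) ≤ l1norm x :=
  calc θ * ∑ i, f (tsProj (E i) x)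
      ≤ 1 * ∑ i, l1norm (tsProj (E i) x) :=
        mul_le_mul hθ1 (Finset.sum_le_sum fun _ _ => hf _)
          (Finset.sum_nonneg fun _ _ => hf0 _) zero_le_one
    _ ≤ l1norm x := (one_mul _).trans_le (TsAdmissible.sum_l1norm_tsProj_le hE x)

end Admissible

section IteratedNorms

variable {θ : ℝ} {S : Set (Finset ℕ+)}

lemma abs_le_tnormAux_zero (x : ℕ+ →₀ ℝ) (i : ℕ+) : |x i| ≤ tnormAux θ S 0 x :=
  le_ciSup ⟨l1norm x, by rintro _ ⟨k, rfl⟩; exact abs_le_l1norm x k⟩ i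

lemma tnormAux_nonneg (m : ℕ) (x : ℕ+ →₀ ℝ) : 0 ≤ tnormAux θ S m x := by
  induction m with
  | zero => exact Real.iSup_nonneg fun _ => abs_nonneg _
  | succ m ih => exact ih.trans (le_max_left _ _)

lemma tnormAux_le_succ (m : ℕ) (x : ℕ+ →₀ ℝ) :
    tnormAux θ S m x ≤ tnormAux θ S (m + 1) x :=
  le_max_left _ _

lemma tnormAux_le_l1norm (hθ1 : θ ≤ 1) (m : ℕ) (x : ℕ+ →₀ ℝ) :
    tnormAux θ S m x ≤ l1norm x := by
  induction m generalizing x with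
  | zero => exact ciSup_le fun i => abs_le_l1norm x i
  | succ m ih =>
    refine max_le (ih x) (Real.sSup_le ?_ (l1norm_nonneg x))
    rintro _ ⟨d, E, hE, rfl⟩
    exact TsAdmissible.mul_sum_le_l1norm hθ1 hE (tnormAux_nonneg m) ih x

lemma le_tnormAux_succ (hθ1 : θ ≤ 1) {m : ℕ} (x : ℕ+ →₀ ℝ)
    {d : ℕ} {E : Fin d → Finset ℕ+} (hE : TsAdmissible S E) :
    θ * ∑ i, tnormAux θ S m (tsProj (E i) x) ≤ tnormAux θ S (m + 1) x := by
  refine le_max_of_le_right (le_csSup ⟨l1norm x, ?_⟩ ⟨d, E, hE, rfl⟩)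
  rintro _ ⟨d', E', hE', rfl⟩
  exact TsAdmissible.mul_sum_le_l1norm hθ1 hE' (tnormAux_nonneg m) (tnormAux_le_l1norm hθ1 m) x

lemma tnormAux_le_tnorm (hθ1 : θ ≤ 1) (m : ℕ) (x : ℕ+ →₀ ℝ) :
    tnormAux θ S m x ≤ tnorm θ S x :=
  le_ciSup (f := fun m => tnormAux θ S m x)
    ⟨l1norm x, by rintro _ ⟨k, rfl⟩; exact tnormAux_le_l1norm hθ1 k x⟩ m

lemma abs_le_tnorm (hθ1 : θ ≤ 1) (x : ℕ+ →₀ ℝ) (i : ℕ+) :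
    |x i| ≤ tnorm θ S x :=
  (abs_le_tnormAux_zero x i).trans (tnormAux_le_tnorm hθ1 0 x)

lemma tnormAux_le_of_abs_le (hθ0 : 0 ≤ θ) (hθ1 : θ ≤ 1) (m : ℕ) {x y : ℕ+ →₀ ℝ}
    (hxy : ∀ i, |x i| ≤ |y i|) : tnormAux θ S m x ≤ tnormAux θ S m y := by
  induction m generalizing x y with
  | zero => exact ciSup_le fun i => (hxy i).trans (abs_le_tnormAux_zero y i)
  | succ m ih =>
    refine max_le ((ih hxy).trans (tnormAux_le_succ m y))
      (Real.sSup_le ?_ (tnormAux_nonneg _ y))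
    rintro _ ⟨d, E, hE, rfl⟩
    refine le_trans ?_ (le_tnormAux_succ hθ1 y hE)
    refine mul_le_mul_of_nonneg_left (Finset.sum_le_sum fun i _ => ih fun k => ?_) hθ0
    simp only [tsProj_apply]
    split_ifs
    exacts [hxy k, le_rfl]

lemma tnormAux_add_le (hθ0 : 0 ≤ θ) (hθ1 : θ ≤ 1) (m : ℕ) (x y : ℕ+ →₀ ℝ) :
    tnormAux θ S m (x + y) ≤ tnormAux θ S m x + tnormAux θ S m y := by
  induction m generalizing x y with
  | zero =>
    exact ciSup_le fun i => (abs_add_le _ _).trans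
      (add_le_add (abs_le_tnormAux_zero x i) (abs_le_tnormAux_zero y i))
  | succ m ih =>
    refine max_le ((ih x y).trans (add_le_add (tnormAux_le_succ m x) (tnormAux_le_succ m y)))
      (Real.sSup_le ?_ (add_nonneg (tnormAux_nonneg _ x) (tnormAux_nonneg _ y)))
    rintro _ ⟨d, E, hE, rfl⟩
    calc θ * ∑ i, tnormAux θ S m (tsProj (E i) (x + y))
        ≤ θ * ∑ i, (tnormAux θ S m (tsProj (E i) x) + tnormAux θ S m (tsProj (E i) y)) := by
          refine mul_le_mul_of_nonneg_left (Finset.sum_le_sum fun i _ => ?_) hθ0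
          rw [tsProj_add]
          exact ih _ _
      _ = θ * ∑ i, tnormAux θ S m (tsProj (E i) x)
            + θ * ∑ i, tnormAux θ S m (tsProj (E i) y) := by
          rw [Finset.sum_add_distrib, mul_add]
      _ ≤ tnormAux θ S (m + 1) x + tnormAux θ S (m + 1) y :=
          add_le_add (le_tnormAux_succ hθ1 x hE) (le_tnormAux_succ hθ1 y hE)

lemma tnormAux_smul_le (hθ0 : 0 ≤ θ) (hθ1 : θ ≤ 1) (m : ℕ) (t : ℝ) (x : ℕ+ →₀ ℝ) :
    tnormAux θ S m (t • x) ≤ |t| * tnormAux θ S m x := by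
  induction m generalizing x with
  | zero =>
    refine ciSup_le fun i => ?_
    rw [Finsupp.smul_apply, smul_eq_mul, abs_mul]
    exact mul_le_mul_of_nonneg_left (abs_le_tnormAux_zero x i) (abs_nonneg t)
  | succ m ih =>
    refine max_le ((ih x).trans (mul_le_mul_of_nonneg_left (tnormAux_le_succ m x) (abs_nonneg t)))
      (Real.sSup_le ?_ (mul_nonneg (abs_nonneg t) (tnormAux_nonneg _ x)))
    rintro _ ⟨d, E, hE, rfl⟩
    calc θ * ∑ i, tnormAux θ S m (tsProj (E i) (t • x))
        ≤ θ * ∑ i, |t| * tnormAux θ S m (tsProj (E i) x) := by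
          refine mul_le_mul_of_nonneg_left (Finset.sum_le_sum fun i _ => ?_) hθ0
          rw [tsProj_smul]
          exact ih _
      _ = |t| * (θ * ∑ i, tnormAux θ S m (tsProj (E i) x)) := by
          rw [← Finset.mul_sum]; ring
      _ ≤ |t| * tnormAux θ S (m + 1) x :=
          mul_le_mul_of_nonneg_left (le_tnormAux_succ hθ1 x hE) (abs_nonneg t)

lemma tnormAux_smul_add_single_le (hθ0 : 0 ≤ θ) (hθ1 : θ ≤ 1) {z : ℕ+ →₀ ℝ} {j : ℕ+}
    (hz : z j = 0) {c : ℝ} (hc : |c| = 1) (m : ℕ) :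
    tnormAux θ S m (θ • z + Finsupp.single j c) ≤ max 1 (θ * tnormAux θ S m z + θ) := by
  induction m with
  | zero =>
    refine ciSup_le fun i => ?_
    rw [Finsupp.add_apply, Finsupp.smul_apply, smul_eq_mul, Finsupp.single_apply]
    rcases eq_or_ne j i with rfl | h
    · rw [if_pos rfl, hz, mul_zero, zero_add, hc]
      exact le_max_left _ _
    · rw [if_neg h, add_zero, abs_mul, abs_of_nonneg hθ0]
      have := mul_le_mul_of_nonneg_left (abs_le_tnormAux_zero (θ := θ) (S := S) z i) hθ0
      exact le_max_of_le_right (by linarith)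
  | succ m ih =>
    refine max_le (ih.trans (max_le_max le_rfl ?_)) (Real.sSup_le ?_ (zero_le_one.trans ?_))
    · exact add_le_add_left (mul_le_mul_of_nonneg_left (tnormAux_le_succ m z) hθ0) θ
    · rintro _ ⟨d, E, hE, rfl⟩
      set s := Finsupp.single j c
      refine le_max_of_le_right ?_
      calc θ * ∑ i, tnormAux θ S m (tsProj (E i) (θ • z + s))
          ≤ θ * ∑ i, (θ * tnormAux θ S m (tsProj (E i) z) + l1norm (tsProj (E i) s)) := by
            refine mul_le_mul_of_nonneg_left (Finset.sum_le_sum fun i _ => ?_) hθ0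
            rw [tsProj_add, tsProj_smul]
            refine (tnormAux_add_le hθ0 hθ1 m _ _).trans (add_le_add ?_ ?_)
            · exact (tnormAux_smul_le hθ0 hθ1 m θ _).trans_eq (by rw [abs_of_nonneg hθ0])
            · exact tnormAux_le_l1norm hθ1 m _
        _ = θ * (θ * ∑ i, tnormAux θ S m (tsProj (E i) z))
              + θ * ∑ i, l1norm (tsProj (E i) s) := by
            rw [Finset.sum_add_distrib, mul_add, ← Finset.mul_sum]
        _ ≤ θ * tnormAux θ S (m + 1) z + θ * l1norm s :=
            add_le_add (mul_le_mul_of_nonneg_left (le_tnormAux_succ hθ1 z hE) hθ0)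
              (mul_le_mul_of_nonneg_left (TsAdmissible.sum_l1norm_tsProj_le hE s) hθ0)
        _ = θ * tnormAux θ S (m + 1) z + θ := by rw [l1norm_single, hc, mul_one]
    · exact le_max_left _ _

lemma tnorm_smul_erase_add_single_le (hθ0 : 0 ≤ θ) (hθ1 : θ ≤ 1) (u : ℕ+ →₀ ℝ) (j : ℕ+)
    {c : ℝ} (hc : |c| = 1) :
    tnorm θ S (θ • u.erase j + Finsupp.single j c) ≤ max 1 (θ * tnorm θ S u + θ) := by
  refine ciSup_le fun m => (tnormAux_smul_add_single_le hθ0 hθ1 Finsupp.erase_same hc m).trans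
    (max_le_max le_rfl (add_le_add_left (mul_le_mul_of_nonneg_left ?_ hθ0) θ))
  refine (tnormAux_le_of_abs_le hθ0 hθ1 m fun i => ?_).trans (tnormAux_le_tnorm hθ1 m u)
  rw [Finsupp.erase_apply]
  split_ifs
  exacts [abs_zero.trans_le (abs_nonneg _), le_rfl]

lemma one_le_tnorm_smul_erase_add_single (hθ1 : θ ≤ 1) (u : ℕ+ →₀ ℝ) (j : ℕ+)
    {c : ℝ} (hc : |c| = 1) :
    1 ≤ tnorm θ S (θ • u.erase j + Finsupp.single j c) := by
  have := abs_le_tnorm (S := S) hθ1 (θ • u.erase j + Finsupp.single j c) j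
  rwa [Finsupp.add_apply, Finsupp.smul_apply, Finsupp.erase_same, smul_zero, zero_add,
    Finsupp.single_eq_same, hc] at this

end IteratedNorms

end Tsirelson

open Tsirelson

lemma IsTsirelsonSpace.tendsto_tnorm_indicator {θ : ℝ} {n : ℕ} {X : Type*}
    [NormedAddCommGroup X] [NormedSpace ℝ X] {e : ℕ+ → X} (hX : IsTsirelsonSpace θ n X e)
    {a : ℕ+ → ℝ} {x : X} (ha : HasSum (fun i => a i • e i) x) :
    Tendsto (fun F => tnorm θ (Schreier n) (Finsupp.indicator F fun i _ => a i)) atTop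
      (𝓝 ‖x‖) := by
  refine ha.norm.congr fun F => ?_
  rw [← hX.norm_embed, Finsupp.sum_of_support_subset _ (Finsupp.support_indicator_subset F _)
    _ fun i _ => zero_smul ℝ (e i)]
  exact congrArg norm (Finset.sum_congr rfl fun i hi => by rw [Finsupp.indicator_of_mem hi])

lemma Finsupp.indicator_ite_eq_smul_erase_add_single {ι : Type*} [DecidableEq ι]
    {F : Finset ι} {j : ι} (hj : j ∈ F) (θ ε : ℝ) (b : ι → ℝ) :
    (Finsupp.indicator F fun i _ => if i = j then ε else θ * b i)
      = θ • (Finsupp.indicator F fun i _ => b i).erase j + Finsupp.single j ε := by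
  ext i
  simp only [Finsupp.indicator_apply, Finsupp.add_apply, Finsupp.smul_apply,
    Finsupp.erase_apply, Finsupp.single_apply, smul_eq_mul]
  rcases eq_or_ne i j with rfl | h
  · simp [hj]
  · simp [h, Ne.symm h]

theorem tsirelson_perturbation_in_sphere_general
    (θ : ℝ) (hθ0 : 0 < θ) (hθ : θ ≤ 1 / 2) (n : ℕ)
    (X : Type*) [NormedAddCommGroup X] [NormedSpace ℝ X] (e : ℕ+ → X)
    (hX : IsTsirelsonSpace θ n X e)
    (y : X) (hy : ‖y‖ = 1) (b : ℕ+ → ℝ) (hb : HasSum (fun i => b i • e i) y)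
    (j : ℕ+) (ε : ℝ) (hε : ε = 1 ∨ ε = -1) :
    ∃ x : X, HasSum (fun i => (if i = j then ε else θ * b i) • e i) x ∧ ‖x‖ = 1 := by
  classical
  have hθ1 : θ ≤ 1 := by linarith
  have hε1 : |ε| = 1 := by rcases hε with rfl | rfl <;> norm_num
  have hx : HasSum (fun i => (if i = j then ε else θ * b i) • e i)
      (ε • e j - (θ * b j) • e j + θ • y) := by
    convert (hb.const_smul θ).update j (ε • e j) using 1
    · ext i
      rcases eq_or_ne i j with rfl | h <;> simp [smul_smul, *]
    · simp [smul_smul]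
  have hjF : ∀ᶠ F in atTop, j ∈ F :=
    (eventually_ge_atTop {j}).mono fun _ hF => Finset.singleton_subset_iff.mp hF
  have hy' := hX.tendsto_tnorm_indicator hb
  rw [hy] at hy'
  have hbound : Tendsto (fun F => max 1 (θ * tnorm θ (Schreier n)
      (Finsupp.indicator F fun i _ => b i) + θ)) atTop (𝓝 1) := by
    convert tendsto_const_nhds.max ((hy'.const_mul θ).add_const θ) using 2
    exact (max_eq_left (by linarith)).symm
  refine ⟨_, hx, le_antisymm ?_ ?_⟩
  · refine le_of_tendsto_of_tendsto (hX.tendsto_tnorm_indicator hx) hbound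
      (hjF.mono fun F hF => ?_)
    dsimp only
    rw [Finsupp.indicator_ite_eq_smul_erase_add_single hF]
    exact tnorm_smul_erase_add_single_le hθ0.le hθ1 _ j hε1
  · refine ge_of_tendsto (hX.tendsto_tnorm_indicator hx) (hjF.mono fun F hF => ?_)
    rw [Finsupp.indicator_ite_eq_smul_erase_add_single hF]
    exact one_le_tnorm_smul_erase_add_single hθ1 _ j hε1

/-- If `y = ∑ᵢ bᵢ eᵢ` lies in the unit sphere of `T[θ, S_n]`, `j` is a
coordinate and `ε = ±1`, then the vector `x = ∑_{i ≠ j} θ bᵢ eᵢ + ε e_j` lies in the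
unit sphere. -/
theorem tsirelson_perturbation_in_sphere
    (θ : ℝ) (hθ0 : 0 < θ) (hθ : θ ≤ 1 / 2) (n : ℕ) (hn : 1 ≤ n)
    (X : Type*) [NormedAddCommGroup X] [NormedSpace ℝ X] (e : ℕ+ → X)
    (hX : IsTsirelsonSpace θ n X e)
    (y : X) (hy : ‖y‖ = 1) (b : ℕ+ → ℝ) (hb : HasSum (fun i => b i • e i) y)
    (j : ℕ+) (ε : ℝ) (hε : ε = 1 ∨ ε = -1) :
    ∃ x : X, HasSum (fun i => (if i = j then ε else θ * b i) • e i) x ∧ ‖x‖ = 1 :=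
  tsirelson_perturbation_in_sphere_general θ hθ0 hθ n X e hX y hy b hb j ε hε
end
end

section
/- Let θ ∈ (0, 1/2], let d be a positive integer, let j₁ < j₂ < ⋯ < j_d be positive integers with d ≤ j₁, and let ε₁, …, ε_d ∈ {−1, 1}. Then ‖ Σ_{k=1}^{d} ε_k e_{j_k} ‖_{θ,S₁} = max(1, θ·d). -/
open scoped BigOperators

noncomputable section

section TsirelsonAux

lemma tnormAux_zero_eq (θ : ℝ) (S : Set (Finset ℕ+)) (x : ℕ+ →₀ ℝ) :
    tnormAux θ S 0 x = ⨆ i, |x i| := rfl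

lemma tnormAux_succ_eq (θ : ℝ) (S : Set (Finset ℕ+)) (m : ℕ) (x : ℕ+ →₀ ℝ) :
    tnormAux θ S (m + 1) x =
      max (tnormAux θ S m x)
        (sSup {r : ℝ | ∃ (d : ℕ) (E : Fin d → Finset ℕ+), TsAdmissible S E ∧
          r = θ * ∑ i, tnormAux θ S m (tsProj (E i) x)}) := rfl

lemma tsProj_zero' (E : Finset ℕ+) : tsProj E (0 : ℕ+ →₀ ℝ) = 0 :=
  Finsupp.filter_zero _

lemma tsProj_apply (E : Finset ℕ+) (y : ℕ+ →₀ ℝ) (a : ℕ+) :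
    tsProj E y a = if a ∈ E then y a else 0 := by
  simp [tsProj, Finsupp.filter_apply]

lemma tsProj_support (E : Finset ℕ+) (y : ℕ+ →₀ ℝ) :
    (tsProj E y).support = y.support.filter (· ∈ E) := by
  simp [tsProj, Finsupp.support_filter]

lemma abs_tsProj_le (E : Finset ℕ+) (y : ℕ+ →₀ ℝ) (hy : ∀ a, |y a| ≤ 1) (a : ℕ+) :
    |tsProj E y a| ≤ 1 := by
  rw [tsProj_apply]
  split
  · exact hy a
  · simp

lemma tnormAux_of_zero (θ : ℝ) (S : Set (Finset ℕ+)) :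
    ∀ m, tnormAux θ S m (0 : ℕ+ →₀ ℝ) = 0 := by
  intro m
  induction m with
  | zero => simp [tnormAux_zero_eq]
  | succ m ih =>
    have hT : sSup {r : ℝ | ∃ (d : ℕ) (E : Fin d → Finset ℕ+), TsAdmissible S E ∧
        r = θ * ∑ i, tnormAux θ S m (tsProj (E i) (0 : ℕ+ →₀ ℝ))} ≤ 0 := by
      apply Real.sSup_le _ le_rfl
      rintro r ⟨d, E, -, rfl⟩
      simp [tsProj_zero', ih]
    rw [tnormAux_succ_eq, ih]
    exact max_eq_left hT

/-- Sum over a block family of level-`m` norms of projections is at most the support size. -/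
lemma sum_tnormAux_proj_le (θ : ℝ) (_hθ0 : 0 ≤ θ) (hθ1 : θ ≤ 1) (S : Set (Finset ℕ+))
    (m : ℕ) (y : ℕ+ →₀ ℝ) (hy : ∀ a, |y a| ≤ 1)
    {k : ℕ} (E : Fin k → Finset ℕ+)
    (hord : ∀ i j : Fin k, i < j → ∀ a ∈ E i, ∀ b ∈ E j, a < b)
    (hB : ∀ z : ℕ+ →₀ ℝ, (∀ a, |z a| ≤ 1) →
      tnormAux θ S m z ≤ max 1 (θ * (z.support.card : ℝ))) :
    ∑ i, tnormAux θ S m (tsProj (E i) y) ≤ (y.support.card : ℝ) := by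
  have hterm : ∀ i : Fin k,
      tnormAux θ S m (tsProj (E i) y) ≤ ((tsProj (E i) y).support.card : ℝ) := by
    intro i
    by_cases h0 : tsProj (E i) y = 0
    · rw [h0, tnormAux_of_zero]
      positivity
    · have hne : (tsProj (E i) y).support.Nonempty := Finsupp.support_nonempty_iff.mpr h0
      have hc : (1 : ℝ) ≤ ((tsProj (E i) y).support.card : ℝ) := by
        exact_mod_cast Finset.card_pos.mpr hne
      refine (hB _ (abs_tsProj_le (E i) y hy)).trans (max_le hc ?_)
      calc θ * ((tsProj (E i) y).support.card : ℝ)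
          ≤ 1 * ((tsProj (E i) y).support.card : ℝ) := by
            apply mul_le_mul_of_nonneg_right hθ1 (by positivity)
        _ = _ := one_mul _
  calc ∑ i, tnormAux θ S m (tsProj (E i) y)
      ≤ ∑ i, ((tsProj (E i) y).support.card : ℝ) :=
        Finset.sum_le_sum fun i _ => hterm i
    _ ≤ (y.support.card : ℝ) := by
        have hdisj : ∀ i₁ ∈ (Finset.univ : Finset (Fin k)), ∀ i₂ ∈ (Finset.univ : Finset (Fin k)),
            i₁ ≠ i₂ → Disjoint ((tsProj (E i₁) y).support) ((tsProj (E i₂) y).support) := by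
          rintro i₁ - i₂ - hne12
          rw [tsProj_support, tsProj_support, Finset.disjoint_left]
          intro a ha1 ha2
          simp only [Finset.mem_filter] at ha1 ha2
          rcases lt_or_gt_of_ne hne12 with h | h
          · exact absurd (hord i₁ i₂ h a ha1.2 a ha2.2) (lt_irrefl a)
          · exact absurd (hord i₂ i₁ h a ha2.2 a ha1.2) (lt_irrefl a)
        have hcard : ∑ i, ((tsProj (E i) y).support.card) ≤ y.support.card := by
          rw [← Finset.card_biUnion hdisj]
          apply Finset.card_le_card
          intro a ha
          rw [Finset.mem_biUnion] at ha
          obtain ⟨i, -, hi⟩ := ha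
          rw [tsProj_support] at hi
          exact (Finset.mem_filter.mp hi).1
        exact_mod_cast hcard

/-- Upper bound: each `‖y‖_m ≤ max(1, θ·|supp y|)` for vectors with coordinates in `[-1,1]`. -/
lemma tnormAux_le_max (θ : ℝ) (hθ0 : 0 ≤ θ) (hθ1 : θ ≤ 1) (S : Set (Finset ℕ+)) :
    ∀ m (y : ℕ+ →₀ ℝ), (∀ a, |y a| ≤ 1) →
      tnormAux θ S m y ≤ max 1 (θ * (y.support.card : ℝ)) := by
  intro m
  induction m with
  | zero =>
    intro y hy
    rw [tnormAux_zero_eq]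
    exact Real.iSup_le (fun i => (hy i).trans (le_max_left _ _))
      (zero_le_one.trans (le_max_left _ _))
  | succ m ih =>
    intro y hy
    rw [tnormAux_succ_eq]
    apply max_le (ih y hy)
    apply Real.sSup_le _ (zero_le_one.trans (le_max_left _ _))
    rintro r ⟨k, E, hadm, rfl⟩
    have := sum_tnormAux_proj_le θ hθ0 hθ1 S m y hy E hadm.2.1 ih
    calc θ * ∑ i, tnormAux θ S m (tsProj (E i) y)
        ≤ θ * (y.support.card : ℝ) := mul_le_mul_of_nonneg_left this hθ0
      _ ≤ max 1 (θ * (y.support.card : ℝ)) := le_max_right _ _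

end TsirelsonAux

/-- For `j₁ < ⋯ < j_d` with `d ≤ j₁` and signs `ε_k ∈ {−1, 1}`,
`‖∑ₖ ε_k e_{j_k}‖_{θ,S₁} = max(1, θ d)`. -/
theorem tnorm_signed_sum
    (θ : ℝ) (hθ0 : 0 < θ) (hθ : θ ≤ 1 / 2)
    (d : ℕ) (hd : 0 < d) (j : Fin d → ℕ+) (hmono : StrictMono j)
    (hdj : d ≤ ((j ⟨0, hd⟩ : ℕ+) : ℕ))
    (ε : Fin d → ℝ) (hε : ∀ k, ε k = 1 ∨ ε k = -1) :
    tnorm θ (Schreier 1) (∑ k, Finsupp.single (j k) (ε k)) = max 1 (θ * (d : ℝ)) := by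
  have hθ1 : θ ≤ 1 := by linarith
  set S := Schreier 1 with hS
  set x : ℕ+ →₀ ℝ := ∑ k, Finsupp.single (j k) (ε k) with hx
  have habs1 : ∀ k, |ε k| = 1 := by
    intro k; rcases hε k with h | h <;> simp [h]
  have hxapp : ∀ k, x (j k) = ε k := by
    intro k
    rw [hx, Finsupp.finset_sum_apply]
    simp [Finsupp.single_apply, hmono.injective.eq_iff]
  have hxzero : ∀ i : ℕ+, (∀ k, j k ≠ i) → x i = 0 := by
    intro i hi
    rw [hx, Finsupp.finset_sum_apply]
    apply Finset.sum_eq_zero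
    intro k _
    simp [Finsupp.single_apply, hi k]
  have habs : ∀ i, |x i| ≤ 1 := by
    intro i
    by_cases h : ∃ k, j k = i
    · obtain ⟨k, rfl⟩ := h
      rw [hxapp k, habs1 k]
    · push_neg at h
      rw [hxzero i h]; simp
  have hsuppsub : x.support ⊆ Finset.image j Finset.univ := by
    intro i hi
    by_contra hmem
    apply Finsupp.mem_support_iff.mp hi
    apply hxzero
    intro k hk
    exact hmem (Finset.mem_image.mpr ⟨k, Finset.mem_univ _, hk⟩)
  have hcard : (x.support.card : ℝ) ≤ (d : ℝ) := by
    have : x.support.card ≤ d := by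
      calc x.support.card ≤ (Finset.image j Finset.univ).card := Finset.card_le_card hsuppsub
        _ ≤ (Finset.univ : Finset (Fin d)).card := Finset.card_image_le
        _ = d := by simp
    exact_mod_cast this
  set M : ℝ := max 1 (θ * (d : ℝ)) with hM
  have hM0 : (0 : ℝ) ≤ M := zero_le_one.trans (le_max_left _ _)
  have hbdd : ∀ m, tnormAux θ S m x ≤ M := by
    intro m
    refine (tnormAux_le_max θ hθ0.le hθ1 S m x habs).trans (max_le_max le_rfl ?_)
    exact mul_le_mul_of_nonneg_left hcard hθ0.le
  have hrangebdd : BddAbove (Set.range fun m => tnormAux θ S m x) := by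
    refine ⟨M, ?_⟩
    rintro r ⟨m, rfl⟩
    exact hbdd m
  apply le_antisymm
  · exact Real.iSup_le hbdd hM0
  · apply max_le
    · -- 1 ≤ tnorm
      have h0 : (1 : ℝ) ≤ tnormAux θ S 0 x := by
        rw [tnormAux_zero_eq]
        calc (1 : ℝ) = |x (j ⟨0, hd⟩)| := by rw [hxapp, habs1]
          _ ≤ ⨆ i, |x i| := le_ciSup (f := fun i : ℕ+ => |x i|) ⟨1, by rintro r ⟨i, rfl⟩; exact habs i⟩ _
      exact h0.trans (le_ciSup hrangebdd 0)
    · -- θ d ≤ tnorm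
      have hproj : ∀ i : Fin d, tnormAux θ S 0 (tsProj {j i} x) = 1 := by
        intro i
        have happ : tsProj {j i} x (j i) = ε i := by
          rw [tsProj_apply]; simp [hxapp]
        rw [tnormAux_zero_eq]
        apply le_antisymm
        · exact Real.iSup_le (abs_tsProj_le _ _ habs) zero_le_one
        · calc (1 : ℝ) = |tsProj {j i} x (j i)| := by rw [happ, habs1]
            _ ≤ ⨆ a, |tsProj {j i} x a| :=
              le_ciSup (f := fun a : ℕ+ => |tsProj {j i} x a|)
                ⟨1, by rintro r ⟨a, rfl⟩; exact abs_tsProj_le _ _ habs a⟩ _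
      have hadm : TsAdmissible S (fun i : Fin d => ({j i} : Finset ℕ+)) := by
        refine ⟨fun i => ⟨j i, Finset.mem_singleton_self _⟩, ?_, j, ?_, ?_⟩
        · intro i k hik a ha b hb
          rw [Finset.mem_singleton] at ha hb
          subst ha; subst hb
          exact hmono hik
        · intro i
          constructor
          · simp
          · intro b hb
            simp only [Finset.coe_singleton, Set.mem_singleton_iff] at hb
            exact hb.ge
        · show ∀ a ∈ Finset.univ.image j, (Finset.univ.image j).card ≤ (a : ℕ)
          intro a ha
          obtain ⟨k, -, rfl⟩ := Finset.mem_image.mp ha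
          have hcardim : (Finset.univ.image j).card = d := by
            rw [Finset.card_image_of_injective _ hmono.injective]; simp
          rw [hcardim]
          calc d ≤ ((j ⟨0, hd⟩ : ℕ+) : ℕ) := hdj
            _ ≤ ((j k : ℕ+) : ℕ) := by
              exact_mod_cast hmono.monotone (show (⟨0, hd⟩ : Fin d) ≤ k by
                simp [Fin.le_def])
      have hTbdd : BddAbove {r : ℝ | ∃ (k : ℕ) (E : Fin k → Finset ℕ+), TsAdmissible S E ∧
          r = θ * ∑ i, tnormAux θ S 0 (tsProj (E i) x)} := by
        refine ⟨θ * (x.support.card : ℝ), ?_⟩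
        rintro r ⟨k, E, hadm', rfl⟩
        exact mul_le_mul_of_nonneg_left
          (sum_tnormAux_proj_le θ hθ0.le hθ1 S 0 x habs E hadm'.2.1
            (fun z hz => tnormAux_le_max θ hθ0.le hθ1 S 0 z hz)) hθ0.le
      have hmem : θ * (d : ℝ) ∈ {r : ℝ | ∃ (k : ℕ) (E : Fin k → Finset ℕ+),
          TsAdmissible S E ∧ r = θ * ∑ i, tnormAux θ S 0 (tsProj (E i) x)} := by
        refine ⟨d, fun i => {j i}, hadm, ?_⟩
        rw [Finset.sum_congr rfl fun i _ => hproj i]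
        simp
      have h1 : θ * (d : ℝ) ≤ tnormAux θ S 1 x := by
        rw [tnormAux_succ_eq]
        exact (le_csSup hTbdd hmem).trans (le_max_right _ _)
      exact h1.trans (le_ciSup hrangebdd 1)
end
end
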